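/- arXiv:2604.01875 — 2 statements merged into one kernel-verified Lean document; each statement's English description precedes it below -/
import Mathlib

section
/- Let X be a real Banach space and let c ≥ 1. If X has the c-strong Schur property, then X is (2c+1)-Schur. -/
/-!
Let `a = ca(x_n) > 0` and `d = de(x_n)`. For small `ε`, differences `y_n = x_{p_n} - x_{q_n}` of
far-out terms have norms in `[a - ε, a + ε]`, while every functional of the unit ball is
eventually at most `d + ε` in absolute value on them. If some `y_i` is frequently within `t` of
the `y_j`, a norming functional of `y_i` gives `a - d ≲ t`. Otherwise a subsequence is
`t`-separated, its normalisation is about `t / a`-separated, and the strong Schur property gives a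
further subsequence with `ℓ¹` lower constant about `t / (2ca)`; on its span the sum of the
coefficients times that constant is a functional of norm at most one, and its Hahn–Banach
extension forces `t ≲ 2cd`. Taking `t` just above that bound and letting `ε → 0` gives
`a - d ≤ 2cd`.
-/

open scoped BigOperators
open Filter

/-- `ca` of a real sequence: `inf_n sup {|t_k - t_l| : k, l ≥ n}`. -/
noncomputable def caSeqR (t : ℕ → ℝ) : ℝ :=
  sInf {s | ∃ n : ℕ, s = sSup {u | ∃ k, n ≤ k ∧ ∃ l, n ≤ l ∧ u = |t k - t l|}}

/-- `ca` of a sequence in a normed space: `inf_n diam {x_k : k ≥ n}`. -/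
noncomputable def caSeq {X : Type*} [NormedAddCommGroup X] (x : ℕ → X) : ℝ :=
  sInf {s | ∃ n : ℕ, s = Metric.diam (x '' Set.Ici n)}

/-- `de` of a sequence: `sup {ca((x*(x_n))_n) : x* ∈ B_{X*}}`. -/
noncomputable def deSeq {X : Type*} [NormedAddCommGroup X] [NormedSpace ℝ X]
    (x : ℕ → X) : ℝ :=
  sSup {t | ∃ φ : X →L[ℝ] ℝ, ‖φ‖ ≤ 1 ∧ t = caSeqR fun n => φ (x n)}

/-- `wca(x_n) = inf {ca((x_{n_k})_k) : (n_k) strictly increasing}`. -/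
noncomputable def wcaSeq {X : Type*} [NormedAddCommGroup X] (x : ℕ → X) : ℝ :=
  sInf {t | ∃ n : ℕ → ℕ, StrictMono n ∧ t = caSeq (x ∘ n)}

/-- `wde(x_n) = inf {de((x_{n_k})_k) : (n_k) strictly increasing}`. -/
noncomputable def wdeSeq {X : Type*} [NormedAddCommGroup X] [NormedSpace ℝ X]
    (x : ℕ → X) : ℝ :=
  sInf {t | ∃ n : ℕ → ℕ, StrictMono n ∧ t = deSeq (x ∘ n)}

/-- A real normed space is `c`-Schur if `ca(x_n) ≤ c · de(x_n)` for every bounded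
sequence `(x_n)`. -/
def IsCSchur (X : Type*) [NormedAddCommGroup X] [NormedSpace ℝ X] (c : ℝ) : Prop :=
  ∀ x : ℕ → X, (∃ C : ℝ, ∀ n, ‖x n‖ ≤ C) → caSeq x ≤ c * deSeq x

/-- A real normed space has the `c`-strong Schur property if every normalized
`δ`-separated sequence admits a subsequence `(2c/δ + ε)`-equivalent to the unit
vector basis of `ℓ¹`. -/
def HasCStrongSchur (X : Type*) [NormedAddCommGroup X] [NormedSpace ℝ X] (c : ℝ) : Prop :=
  ∀ δ : ℝ, 0 < δ → δ ≤ 2 → ∀ ε : ℝ, 0 < ε → ∀ x : ℕ → X,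
    (∀ n, ‖x n‖ = 1) → (∀ n m, n ≠ m → δ ≤ ‖x n - x m‖) →
    ∃ n : ℕ → ℕ, StrictMono n ∧ ∀ (N : ℕ) (a : ℕ → ℝ),
      (2 * c / δ + ε)⁻¹ * ∑ k ∈ Finset.range N, |a k| ≤
        ‖∑ k ∈ Finset.range N, a k • x (n k)‖

open Topology

lemma caSeqR_le {t : ℕ → ℝ} {B : ℝ} (ht : ∀ k l, |t k - t l| ≤ B) : caSeqR t ≤ B := by
  unfold caSeqR
  refine (csInf_le ?_ (by exact ⟨0, rfl⟩)).trans
    (csSup_le (by exact ⟨_, 0, le_rfl, 0, le_rfl, rfl⟩) ?_)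
  · refine ⟨0, ?_⟩
    rintro _ ⟨n, rfl⟩
    exact Real.sSup_nonneg (by rintro _ ⟨k, -, l, -, rfl⟩; positivity)
  · rintro _ ⟨k, -, l, -, rfl⟩
    exact ht k l

lemma exists_abs_sub_lt_of_caSeqR_lt {t : ℕ → ℝ} {B s : ℝ} (ht : ∀ k l, |t k - t l| ≤ B)
    (h : caSeqR t < s) : ∃ N, ∀ k ≥ N, ∀ l ≥ N, |t k - t l| < s := by
  unfold caSeqR at h
  obtain ⟨_, ⟨N, rfl⟩, hN⟩ := exists_lt_of_csInf_lt (by exact ⟨_, 0, rfl⟩) h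
  refine ⟨N, fun k hk l hl => (le_csSup ?_ (by exact ⟨k, hk, l, hl, rfl⟩)).trans_lt hN⟩
  exact ⟨B, by rintro _ ⟨k, -, l, -, rfl⟩; exact ht k l⟩

section

variable {X : Type*} [NormedAddCommGroup X]

lemma caSeq_le_diam (x : ℕ → X) (n : ℕ) : caSeq x ≤ Metric.diam (x '' Set.Ici n) := by
  unfold caSeq
  exact csInf_le ⟨0, by rintro _ ⟨m, rfl⟩; exact Metric.diam_nonneg⟩ ⟨n, rfl⟩

lemma exists_diam_lt_of_caSeq_lt {x : ℕ → X} {s : ℝ} (h : caSeq x < s) :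
    ∃ n, Metric.diam (x '' Set.Ici n) < s := by
  unfold caSeq at h
  obtain ⟨_, ⟨n, rfl⟩, hn⟩ := exists_lt_of_csInf_lt (by exact ⟨_, 0, rfl⟩) h
  exact ⟨n, hn⟩

lemma exists_lt_norm_sub_of_lt_caSeq {x : ℕ → X} {s : ℝ} (h : s < caSeq x) (n : ℕ) :
    ∃ k ≥ n, ∃ l ≥ n, s < ‖x k - x l‖ := by
  by_contra! hle
  have hs : 0 ≤ s := by simpa using hle n le_rfl n le_rfl
  have hdiam : Metric.diam (x '' Set.Ici n) ≤ s := by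
    refine Metric.diam_le_of_forall_dist_le hs ?_
    rintro _ ⟨k, hk, rfl⟩ _ ⟨l, hl, rfl⟩
    exact (dist_eq_norm _ _).trans_le (hle k hk l hl)
  linarith [caSeq_le_diam x n]

variable [NormedSpace ℝ X]

lemma deSeq_nonneg (x : ℕ → X) : 0 ≤ deSeq x := by
  unfold deSeq caSeqR
  exact Real.sSup_nonneg <| by
    rintro _ ⟨φ, -, rfl⟩
    exact Real.sInf_nonneg <| by
      rintro _ ⟨n, rfl⟩
      exact Real.sSup_nonneg (by rintro _ ⟨k, -, l, -, rfl⟩; positivity)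

lemma abs_apply_sub_apply_le {φ : X →L[ℝ] ℝ} (hφ : ‖φ‖ ≤ 1) (y z : X) :
    |φ y - φ z| ≤ ‖y - z‖ := by
  rw [← map_sub, ← Real.norm_eq_abs]
  exact (φ.le_of_opNorm_le hφ _).trans_eq (one_mul _)

lemma abs_apply_sub_apply_le_of_norm_le {x : ℕ → X} {C : ℝ} (hx : ∀ n, ‖x n‖ ≤ C)
    {φ : X →L[ℝ] ℝ} (hφ : ‖φ‖ ≤ 1) (k l : ℕ) : |φ (x k) - φ (x l)| ≤ 2 * C := by
  linarith [abs_apply_sub_apply_le hφ (x k) (x l), norm_sub_le (x k) (x l), hx k, hx l]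

lemma caSeqR_le_deSeq {x : ℕ → X} {C : ℝ} (hx : ∀ n, ‖x n‖ ≤ C) {φ : X →L[ℝ] ℝ}
    (hφ : ‖φ‖ ≤ 1) : caSeqR (fun n => φ (x n)) ≤ deSeq x := by
  unfold deSeq
  refine le_csSup ⟨2 * C, ?_⟩ ⟨φ, hφ, rfl⟩
  rintro _ ⟨ψ, hψ, rfl⟩
  exact caSeqR_le (abs_apply_sub_apply_le_of_norm_le hx hψ)

def EventuallyWeaklyBounded (Y : ℕ → X) (η : ℝ) : Prop :=
  ∀ φ : X →L[ℝ] ℝ, ‖φ‖ ≤ 1 → ∀ᶠ n in atTop, |φ (Y n)| ≤ η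

namespace EventuallyWeaklyBounded

variable {Y : ℕ → X} {η : ℝ}

lemma nonneg (hY : EventuallyWeaklyBounded Y η) : 0 ≤ η := by
  obtain ⟨n, hn⟩ := (hY 0 (by simp)).exists
  simpa using hn

lemma comp_tendsto (hY : EventuallyWeaklyBounded Y η) {m : ℕ → ℕ} (hm : Tendsto m atTop atTop) :
    EventuallyWeaklyBounded (Y ∘ m) η :=
  fun φ hφ => hm.eventually (hY φ hφ)

lemma inv_norm_smul (hY : EventuallyWeaklyBounded Y η) {r : ℝ} (hr : 0 < r)
    (hr_le : ∀ n, r ≤ ‖Y n‖) : EventuallyWeaklyBounded (fun n => ‖Y n‖⁻¹ • Y n) (η / r) := by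
  intro φ hφ
  filter_upwards [hY φ hφ] with n hn
  rw [map_smul, smul_eq_mul, abs_mul, abs_inv, abs_norm, inv_mul_le_iff₀ (hr.trans_le (hr_le n))]
  calc |φ (Y n)| ≤ η := hn
    _ = r * (η / r) := (mul_div_cancel₀ η hr.ne').symm
    _ ≤ ‖Y n‖ * (η / r) := mul_le_mul_of_nonneg_right (hr_le n) (div_nonneg hY.nonneg hr.le)

lemma norm_le_add_of_frequently (hY : EventuallyWeaklyBounded Y η) {y : X} {t : ℝ}
    (hy : ∃ᶠ n in atTop, ‖y - Y n‖ ≤ t) : ‖y‖ ≤ η + t := by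
  obtain ⟨φ, hφ, hφy⟩ := exists_dual_vector'' ℝ y
  obtain ⟨n, hyn, hφn⟩ := (hy.and_eventually (hY φ hφ)).exists
  calc ‖y‖ = φ (Y n) + (φ y - φ (Y n)) := by rw [hφy]; simp
    _ ≤ |φ (Y n)| + |φ y - φ (Y n)| := add_le_add (le_abs_self _) (le_abs_self _)
    _ ≤ η + t := add_le_add hφn ((abs_apply_sub_apply_le hφ _ _).trans hyn)

end EventuallyWeaklyBounded

lemma exists_eventuallyWeaklyBounded_deSeq {x : ℕ → X} {C : ℝ} (hx : ∀ n, ‖x n‖ ≤ C) {ε : ℝ}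
    (hε : 0 < ε) : ∃ Y : ℕ → X, (∀ n, caSeq x - ε ≤ ‖Y n‖ ∧ ‖Y n‖ ≤ caSeq x + ε) ∧
      EventuallyWeaklyBounded Y (deSeq x + ε) := by
  obtain ⟨J, hJ⟩ := exists_diam_lt_of_caSeq_lt (lt_add_of_pos_right (caSeq x) hε)
  choose p hp q hq hpq using
    fun n => exists_lt_norm_sub_of_lt_caSeq (sub_lt_self (caSeq x) hε) (n + J)
  have hbdd : Bornology.IsBounded (x '' Set.Ici J) :=
    isBounded_iff_forall_norm_le.2 ⟨C, by rintro _ ⟨k, -, rfl⟩; exact hx k⟩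
  refine ⟨fun n => x (p n) - x (q n), fun n => ⟨(hpq n).le, ?_⟩, fun φ hφ => ?_⟩
  · rw [← dist_eq_norm]
    refine (Metric.dist_le_diam_of_mem hbdd ⟨p n, ?_, rfl⟩ ⟨q n, ?_, rfl⟩).trans hJ.le
    · exact le_of_add_le_right (hp n)
    · exact le_of_add_le_right (hq n)
  · obtain ⟨N, hN⟩ := exists_abs_sub_lt_of_caSeqR_lt (abs_apply_sub_apply_le_of_norm_le hx hφ)
      ((caSeqR_le_deSeq hx hφ).trans_lt (lt_add_of_pos_right _ hε))
    filter_upwards [eventually_ge_atTop N] with n hn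
    rw [map_sub]
    exact (hN _ (by linarith [hp n]) _ (by linarith [hq n])).le

lemma norm_sub_le_norm_mul_add_abs_sub (y z : X) :
    ‖y - z‖ ≤ ‖y‖ * ‖‖y‖⁻¹ • y - ‖z‖⁻¹ • z‖ + |‖y‖ - ‖z‖| := by
  have hsmul (w : X) : ‖w‖ • ‖w‖⁻¹ • w = w := by
    rcases eq_or_ne w 0 with rfl | hw
    · simp
    · exact smul_inv_smul₀ (norm_ne_zero_iff.2 hw) w
  have hz : ‖‖z‖⁻¹ • z‖ ≤ 1 := by
    rcases eq_or_ne z 0 with rfl | hz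
    · simp
    · exact (norm_smul_inv_norm hz).le
  calc ‖y - z‖ = ‖‖y‖ • (‖y‖⁻¹ • y - ‖z‖⁻¹ • z) + (‖y‖ - ‖z‖) • ‖z‖⁻¹ • z‖ := by
        rw [smul_sub, sub_smul, hsmul, hsmul, sub_add_sub_cancel]
    _ ≤ ‖y‖ * ‖‖y‖⁻¹ • y - ‖z‖⁻¹ • z‖ + |‖y‖ - ‖z‖| * ‖‖z‖⁻¹ • z‖ := by
        refine (norm_add_le _ _).trans_eq ?_
        rw [norm_smul, norm_smul, norm_norm, Real.norm_eq_abs]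
    _ ≤ ‖y‖ * ‖‖y‖⁻¹ • y - ‖z‖⁻¹ • z‖ + |‖y‖ - ‖z‖| := by
        gcongr
        exact mul_le_of_le_one_right (abs_nonneg _) hz

lemma div_sub_le_norm_inv_norm_smul_sub {y z : X} {r R t : ℝ} (hR : 0 < R)
    (hy : r ≤ ‖y‖ ∧ ‖y‖ ≤ R) (hz : r ≤ ‖z‖ ∧ ‖z‖ ≤ R) (hyz : t ≤ ‖y - z‖) :
    (t - (R - r)) / R ≤ ‖‖y‖⁻¹ • y - ‖z‖⁻¹ • z‖ := by
  have habs : |‖y‖ - ‖z‖| ≤ R - r := abs_sub_le_iff.2 ⟨by linarith, by linarith⟩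
  have hmul : ‖y‖ * ‖‖y‖⁻¹ • y - ‖z‖⁻¹ • z‖ ≤ R * ‖‖y‖⁻¹ • y - ‖z‖⁻¹ • z‖ :=
    mul_le_mul_of_nonneg_right hy.2 (norm_nonneg _)
  rw [div_le_iff₀' hR]
  linarith [norm_sub_le_norm_mul_add_abs_sub y z]

lemma mul_sum_abs_le_norm_linearCombination {v : ℕ → X} {K : ℝ}
    (hv : ∀ (N : ℕ) (a : ℕ → ℝ), K * ∑ k ∈ Finset.range N, |a k| ≤
      ‖∑ k ∈ Finset.range N, a k • v k‖) (l : ℕ →₀ ℝ) :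
    K * l.sum (fun _ a => |a|) ≤ ‖Finsupp.linearCombination ℝ v l‖ := by
  obtain ⟨N, hN⟩ := l.support.exists_nat_subset_range
  rw [Finsupp.linearCombination_apply, Finsupp.sum_of_support_subset l hN _ (by simp),
    Finsupp.sum_of_support_subset l hN _ (by simp)]
  exact hv N l

lemma exists_norm_le_one_forall_apply_eq {v : ℕ → X} {K : ℝ} (hK : 0 < K)
    (hv : ∀ (N : ℕ) (a : ℕ → ℝ), K * ∑ k ∈ Finset.range N, |a k| ≤
      ‖∑ k ∈ Finset.range N, a k • v k‖) :
    ∃ g : X →L[ℝ] ℝ, ‖g‖ ≤ 1 ∧ ∀ k, g (v k) = K := by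
  have hli : LinearIndependent ℝ v := linearIndependent_iff.2 fun l hl => by
    by_contra hne
    have hpos : 0 < l.sum fun _ a => |a| :=
      Finset.sum_pos (fun i hi => abs_pos.2 (Finsupp.mem_support_iff.1 hi))
        (Finsupp.support_nonempty_iff.2 hne)
    have := mul_sum_abs_le_norm_linearCombination hv l
    rw [hl, norm_zero] at this
    exact (mul_pos hK hpos).not_ge this
  let f : Submodule.span ℝ (Set.range v) →ₗ[ℝ] ℝ :=
    Finsupp.linearCombination ℝ (fun _ => K) ∘ₗ hli.repr
  have hf : ∀ z, ‖f z‖ ≤ 1 * ‖z‖ := fun z => by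
    have hz := mul_sum_abs_le_norm_linearCombination hv (hli.repr z)
    rw [hli.linearCombination_repr] at hz
    calc ‖f z‖ = |(hli.repr z).sum fun _ a => a * K| := by
          simp [f, Finsupp.linearCombination_apply]
      _ ≤ (hli.repr z).sum fun _ a => |a * K| := Finset.abs_sum_le_sum_abs _ _
      _ = K * (hli.repr z).sum fun _ a => |a| := by
          simp [Finsupp.sum, Finset.mul_sum, abs_mul, abs_of_pos hK, mul_comm]
      _ ≤ 1 * ‖z‖ := hz.trans_eq (one_mul _).symm
  obtain ⟨g, hgf, hg⟩ := exists_extension_norm_eq _ (f.mkContinuous 1 hf)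
  refine ⟨g, hg.trans_le (f.mkContinuous_norm_le zero_le_one hf), fun k => ?_⟩
  have hk : v k ∈ Submodule.span ℝ (Set.range v) := Submodule.subset_span ⟨k, rfl⟩
  rw [show v k = ((⟨v k, hk⟩ : Submodule.span ℝ (Set.range v)) : X) from rfl, hgf]
  simp [f, hli.repr_eq_single k ⟨v k, hk⟩ rfl]

lemma le_mul_of_hasCStrongSchur {c : ℝ} (h : HasCStrongSchur X c) (hc : 0 ≤ c) {u : ℕ → X}
    (hu : ∀ n, ‖u n‖ = 1) {δ η : ℝ} (hδ : 0 < δ) (hsep : Pairwise fun i j => δ ≤ ‖u i - u j‖)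
    (hu_weak : EventuallyWeaklyBounded u η) : δ ≤ 2 * c * η := by
  have hδ2 : δ ≤ 2 :=
    (hsep zero_ne_one).trans <| (norm_sub_le _ _).trans_eq (by rw [hu, hu]; norm_num)
  have hbound : ∀ ε > 0, 1 ≤ η * (2 * c / δ + ε) := by
    intro ε hε
    have hP : 0 < 2 * c / δ + ε := by positivity
    obtain ⟨n, hn, hl1⟩ := h δ hδ hδ2 ε hε u hu fun i j hij => hsep hij
    obtain ⟨g, hg, hgu⟩ := exists_norm_le_one_forall_apply_eq (inv_pos.2 hP) hl1
    obtain ⟨k, hk⟩ := (hn.tendsto_atTop.eventually (hu_weak g hg)).exists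
    rwa [hgu, abs_of_pos (inv_pos.2 hP), inv_le_iff_one_le_mul₀ hP] at hk
  have hlim : Tendsto (fun ε => η * (2 * c / δ + ε)) (𝓝[>] 0) (𝓝 (η * (2 * c / δ + 0))) :=
    ((continuous_const.mul (continuous_const.add continuous_id)).tendsto 0).mono_left
      nhdsWithin_le_nhds
  have := ge_of_tendsto hlim (eventually_nhdsWithin_of_forall hbound)
  rw [add_zero, mul_div_assoc', le_div_iff₀ hδ, one_mul] at this
  linarith

lemma sub_le_of_hasCStrongSchur {c : ℝ} (h : HasCStrongSchur X c) (hc : 0 ≤ c) {Y : ℕ → X}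
    {r R η : ℝ} (hr : 0 < r) (hY : ∀ n, r ≤ ‖Y n‖ ∧ ‖Y n‖ ≤ R)
    (hY_weak : EventuallyWeaklyBounded Y η) : r - η ≤ R - r + 2 * c * η * R / r := by
  refine le_of_forall_gt_imp_ge_of_dense fun t ht => ?_
  by_contra! hlt
  have hsep : ∀ i, ∀ᶠ j in atTop, t < ‖Y i - Y j‖ := fun i => by
    by_contra hfreq
    simp only [not_eventually, not_lt] at hfreq
    linarith [(hY i).1, hY_weak.norm_le_add_of_frequently hfreq]
  obtain ⟨m, hm, hm_sep, -⟩ := hasAntitoneBasis_atTop.subbasis_with_rel hsep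
  set u : ℕ → X := fun k => ‖Y (m k)‖⁻¹ • Y (m k)
  have hR : 0 < R := hr.trans_le ((hY 0).1.trans (hY 0).2)
  have hu_sep : Pairwise fun i j => (t - (R - r)) / R ≤ ‖u i - u j‖ := by
    intro i j hij
    rcases hij.lt_or_gt with hij | hij
    · exact div_sub_le_norm_inv_norm_smul_sub hR (hY _) (hY _) (hm_sep hij).le
    · rw [norm_sub_rev]
      exact div_sub_le_norm_inv_norm_smul_sub hR (hY _) (hY _) (hm_sep hij).le
  have hu : ∀ k, ‖u k‖ = 1 := fun k =>
    norm_smul_inv_norm (norm_pos_iff.1 (hr.trans_le (hY (m k)).1))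
  have hu_weak := (hY_weak.comp_tendsto hm.tendsto_atTop).inv_norm_smul hr fun k => (hY (m k)).1
  have hδ : 0 < (t - (R - r)) / R := by
    have hη := hY_weak.nonneg
    have : 0 ≤ 2 * c * η * R / r := by positivity
    exact div_pos (by linarith) hR
  have := le_mul_of_hasCStrongSchur h hc hu hδ hu_sep hu_weak
  rw [div_le_iff₀ hR] at this
  have : 2 * c * (η / r) * R = 2 * c * η * R / r := by ring
  linarith

end

theorem isCSchur_of_hasCStrongSchur_general
    (X : Type*) [NormedAddCommGroup X] [NormedSpace ℝ X]
    (c : ℝ) (hc : 1 ≤ c) (h : HasCStrongSchur X c) :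
    IsCSchur X (2 * c + 1) := by
  rintro x ⟨C, hx⟩
  set a := caSeq x
  set d := deSeq x
  by_contra! hlt
  have ha : 0 < a := (mul_nonneg (by linarith) (deSeq_nonneg x)).trans_lt hlt
  have hbound : ∀ ε ∈ Set.Ioo 0 a,
      0 ≤ 2 * ε + 2 * c * (d + ε) * (a + ε) / (a - ε) - (a - ε - (d + ε)) := by
    rintro ε ⟨hε, hεa⟩
    obtain ⟨Y, hY, hY_weak⟩ := exists_eventuallyWeaklyBounded_deSeq hx hε
    have := sub_le_of_hasCStrongSchur h (by linarith) (sub_pos.2 hεa) hY hY_weak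
    linarith
  have hcont : ContinuousAt
      (fun ε => 2 * ε + 2 * c * (d + ε) * (a + ε) / (a - ε) - (a - ε - (d + ε))) 0 := by
    fun_prop (disch := simpa using ha.ne')
  have hlim := ge_of_tendsto (hcont.tendsto.mono_left (nhdsWithin_le_nhds (s := Set.Ioi 0)))
    (mem_of_superset (Ioo_mem_nhdsGT ha) hbound)
  have hfinal : a - d ≤ 2 * c * d := by
    simpa [ha.ne', mul_div_assoc] using hlim
  linarith

/-- If a real Banach space has the `c`-strong Schur property, then it is
`(2c+1)`-Schur. -/
theorem isCSchur_of_hasCStrongSchur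
    (X : Type*) [NormedAddCommGroup X] [NormedSpace ℝ X] [CompleteSpace X]
    (c : ℝ) (hc : 1 ≤ c) (h : HasCStrongSchur X c) :
    IsCSchur X (2 * c + 1) :=
  isCSchur_of_hasCStrongSchur_general X c hc h
end

section
/- Let X be a real Banach space and let c ≥ 1. Then the following are equivalent: (ii) wca(x_n) ≤ c·de(x_n) for every bounded sequence (x_n) in X; (iii) wca(x_n) ≤ c·wde(x_n) for every bounded sequence (x_n) in X. -/
open scoped BigOperators
open Filter

-- aux lemmas
lemma caSeqR_zero : caSeqR (fun _ => (0:ℝ)) = 0 := by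
  unfold caSeqR
  have : {s | ∃ n : ℕ, s = sSup {u | ∃ k, n ≤ k ∧ ∃ l, n ≤ l ∧ u = |(0:ℝ) - 0|}} = {0} := by
    ext s
    constructor
    · rintro ⟨n, rfl⟩
      have h1 : {u | ∃ k, n ≤ k ∧ ∃ l, n ≤ l ∧ u = |(0:ℝ) - 0|} = {0} := by
        ext u
        constructor
        · rintro ⟨k, _, l, _, rfl⟩; simp
        · rintro rfl; exact ⟨n, le_rfl, n, le_rfl, by simp⟩
      rw [h1, csSup_singleton]; rfl
    · rintro rfl
      refine ⟨0, ?_⟩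
      have h1 : {u | ∃ k, (0:ℕ) ≤ k ∧ ∃ l, (0:ℕ) ≤ l ∧ u = |(0:ℝ) - 0|} = {0} := by
        ext u
        constructor
        · rintro ⟨k, _, l, _, rfl⟩; simp
        · rintro rfl; exact ⟨0, le_rfl, 0, le_rfl, by simp⟩
      rw [h1, csSup_singleton]
  rw [this, csInf_singleton]

lemma caSeqR_nonneg_le {t : ℕ → ℝ} {M : ℝ} (_hM : 0 ≤ M)
    (hb : ∀ k l, |t k - t l| ≤ M) : 0 ≤ caSeqR t ∧ caSeqR t ≤ M := by
  set S := fun n : ℕ => {u | ∃ k, n ≤ k ∧ ∃ l, n ≤ l ∧ u = |t k - t l|} with hS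
  have hne : ∀ n, (S n).Nonempty := fun n => ⟨|t n - t n|, n, le_rfl, n, le_rfl, rfl⟩
  have hbdd : ∀ n, ∀ u ∈ S n, u ≤ M := by
    rintro n u ⟨k, _, l, _, rfl⟩; exact hb k l
  have hsup_le : ∀ n, sSup (S n) ≤ M := fun n => csSup_le (hne n) (hbdd n)
  have hsup_nonneg : ∀ n, 0 ≤ sSup (S n) := by
    intro n
    have h0 : |t n - t n| ∈ S n := ⟨n, le_rfl, n, le_rfl, rfl⟩
    calc (0:ℝ) = |t n - t n| := by simp
      _ ≤ sSup (S n) := le_csSup ⟨M, hbdd n⟩ h0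
  constructor
  · apply le_csInf ⟨sSup (S 0), Set.mem_setOf.mpr ⟨0, rfl⟩⟩
    rintro s ⟨n, rfl⟩; exact hsup_nonneg n
  · calc caSeqR t ≤ sSup (S 0) := csInf_le ⟨0, by rintro s ⟨n, rfl⟩; exact hsup_nonneg n⟩ ⟨0, rfl⟩
      _ ≤ M := hsup_le 0

lemma deSeq_nonneg_s8 {X : Type*} [NormedAddCommGroup X] [NormedSpace ℝ X]
    {x : ℕ → X} {C : ℝ} (hC : ∀ n, ‖x n‖ ≤ C) : 0 ≤ deSeq x := by
  have hC0 : 0 ≤ C := le_trans (norm_nonneg _) (hC 0)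
  apply le_csSup
  · refine ⟨2 * C, ?_⟩
    rintro t ⟨φ, hφ, rfl⟩
    refine (caSeqR_nonneg_le (by linarith) ?_).2
    intro k l
    calc |φ (x k) - φ (x l)| = |φ (x k - x l)| := by rw [map_sub]
      _ ≤ ‖φ‖ * ‖x k - x l‖ := φ.le_opNorm _
      _ ≤ 1 * (‖x k‖ + ‖x l‖) := by
          apply mul_le_mul hφ (norm_sub_le _ _) (norm_nonneg _) zero_le_one
      _ ≤ 2 * C := by have := hC k; have := hC l; linarith
  · exact ⟨0, by simp [norm_le_zero_iff.mpr rfl], by simp [caSeqR_zero]⟩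

lemma caSeq_nonneg {X : Type*} [NormedAddCommGroup X] (x : ℕ → X) : 0 ≤ caSeq x := by
  apply le_csInf ⟨Metric.diam (x '' Set.Ici 0), Set.mem_setOf.mpr ⟨0, rfl⟩⟩
  rintro s ⟨n, rfl⟩; exact Metric.diam_nonneg

lemma wcaSeq_le_comp {X : Type*} [NormedAddCommGroup X] (x : ℕ → X)
    {n : ℕ → ℕ} (hn : StrictMono n) : wcaSeq x ≤ wcaSeq (x ∘ n) := by
  apply csInf_le_csInf
  · exact ⟨0, by rintro t ⟨m, _, rfl⟩; exact caSeq_nonneg _⟩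
  · exact ⟨caSeq ((x ∘ n) ∘ id), id, strictMono_id, rfl⟩
  · rintro t ⟨m, hm, rfl⟩
    exact ⟨n ∘ m, hn.comp hm, rfl⟩

lemma wdeSeq_le_deSeq {X : Type*} [NormedAddCommGroup X] [NormedSpace ℝ X]
    {x : ℕ → X} {C : ℝ} (hC : ∀ n, ‖x n‖ ≤ C) : wdeSeq x ≤ deSeq x := by
  apply csInf_le
  · refine ⟨0, ?_⟩
    rintro t ⟨m, hm, rfl⟩
    exact deSeq_nonneg_s8 (C := C) (fun k => hC (m k))
  · exact ⟨id, strictMono_id, by rw [Function.comp_id]⟩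

/-- For a real Banach space, `wca ≤ c·de` for all bounded sequences iff
`wca ≤ c·wde` for all bounded sequences. -/
theorem wca_le_de_iff_wca_le_wde
    (X : Type*) [NormedAddCommGroup X] [NormedSpace ℝ X] [CompleteSpace X]
    (c : ℝ) (hc : 1 ≤ c) :
    (∀ x : ℕ → X, (∃ C : ℝ, ∀ n, ‖x n‖ ≤ C) → wcaSeq x ≤ c * deSeq x) ↔
      (∀ x : ℕ → X, (∃ C : ℝ, ∀ n, ‖x n‖ ≤ C) → wcaSeq x ≤ c * wdeSeq x) := by
  have hc0 : (0:ℝ) < c := lt_of_lt_of_le one_pos hc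
  constructor
  · intro H x hx
    obtain ⟨C, hC⟩ := hx
    rw [mul_comm, ← div_le_iff₀ hc0]
    apply le_csInf ⟨deSeq (x ∘ id), Set.mem_setOf.mpr ⟨id, strictMono_id, rfl⟩⟩
    rintro t ⟨n, hn, rfl⟩
    rw [div_le_iff₀ hc0, mul_comm]
    calc wcaSeq x ≤ wcaSeq (x ∘ n) := wcaSeq_le_comp x hn
      _ ≤ c * deSeq (x ∘ n) := H (x ∘ n) ⟨C, fun k => hC (n k)⟩
  · intro H x hx
    obtain ⟨C, hC⟩ := hx
    calc wcaSeq x ≤ c * wdeSeq x := H x ⟨C, hC⟩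
      _ ≤ c * deSeq x := by
          apply mul_le_mul_of_nonneg_left (wdeSeq_le_deSeq hC) (le_of_lt hc0)
end
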